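/- Let f: ℕ → ℝ≥0 satisfy 0 < f(k) < f(k−1) + f(2) for every k ≥ 3. Then for every n ≥ 2 and every tree T with n leaves, 𝔠_{MDM,f}(T) ≤ ((f(0)+f(2))/4)·(n−1)(n−2), with equality if and only if T is isomorphic to the comb K_n. Hence 𝔠_{MDM,f} attains its maximum on 𝒯*_n exactly at the comb. -/

import Mathlib

/-- Rooted trees encoded as a root together with the list of subtrees
rooted at its children. -/
inductive MTree : Type
  | node : List MTree → MTree

namespace MTree

/-- Number of leaves of a tree (a single node counts as one leaf). -/
def leafCount : MTree → ℕ
  | node ts => max 1 (ts.attach.map (fun x => leafCount x.1)).sum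
decreasing_by
  have := List.sizeOf_lt_of_mem x.2
  simp only [node.sizeOf_spec]; omega

/-- `deltaF f T = Σ_{v ∈ V(T)} f (deg v)`, the `f`-size of `T`. -/
noncomputable def deltaF (f : ℕ → ℝ) : MTree → ℝ
  | node ts => f ts.length + (ts.attach.map (fun x => deltaF f x.1)).sum
decreasing_by
  have := List.sizeOf_lt_of_mem x.2
  simp only [node.sizeOf_spec]; omega

/-- The Colless-like index relative to a "dissimilarity" `D` and a function `f`:
the sum, over all internal nodes `v`, of `D` applied to the list of `f`-sizes of
the subtrees rooted at the children of `v`. -/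
noncomputable def cIndex (D : List ℝ → ℝ) (f : ℕ → ℝ) : MTree → ℝ
  | node ts => (if ts.isEmpty then 0 else D (ts.map (deltaF f)))
      + (ts.attach.map (fun x => cIndex D f x.1)).sum
decreasing_by
  have := List.sizeOf_lt_of_mem x.2
  simp only [node.sizeOf_spec]; omega

/-- The Colless index of a (bifurcating) tree: the sum over the internal nodes of the
absolute value of the difference of the numbers of leaves of the two child subtrees. -/
def colless : MTree → ℕ
  | node ts =>
      (match ts with
       | [a, b] => ((a.leafCount : ℤ) - (b.leafCount : ℤ)).natAbs
       | _ => 0)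
      + (ts.attach.map (fun x => colless x.1)).sum
decreasing_by
  have := List.sizeOf_lt_of_mem x.2
  simp only [node.sizeOf_spec]; omega

/-- The quadratic Colless index of a (bifurcating) tree. -/
def collessSq : MTree → ℕ
  | node ts =>
      (match ts with
       | [a, b] => ((a.leafCount : ℤ) - (b.leafCount : ℤ)).natAbs ^ 2
       | _ => 0)
      + (ts.attach.map (fun x => collessSq x.1)).sum
decreasing_by
  have := List.sizeOf_lt_of_mem x.2
  simp only [node.sizeOf_spec]; omega

/-- A tree in the sense of the paper: no node of out-degree 1. -/
inductive WellFormed : MTree → Prop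
  | node {ts : List MTree} : ts.length ≠ 1 → (∀ t ∈ ts, WellFormed t) →
      WellFormed (node ts)

/-- A bifurcating tree: every internal node has out-degree exactly 2. -/
inductive Bifurcating : MTree → Prop
  | node {ts : List MTree} : (ts.length = 0 ∨ ts.length = 2) →
      (∀ t ∈ ts, Bifurcating t) → Bifurcating (node ts)

/-- Isomorphism of (list-encoded) trees: the lists of child subtrees match up to
a permutation and recursively isomorphic subtrees. -/
inductive Iso : MTree → MTree → Prop
  | node {ts us vs : List MTree} :
      List.Forall₂ Iso ts vs → vs.Perm us → Iso (node ts) (node us)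

/-- A tree is fully symmetric when, for every internal node, the subtrees rooted at
its children are pairwise isomorphic. -/
inductive FullySymmetric : MTree → Prop
  | node {ts : List MTree} : (∀ s ∈ ts, ∀ t ∈ ts, Iso s t) →
      (∀ t ∈ ts, FullySymmetric t) → FullySymmetric (node ts)

/-- The comb `K_n` with `n ≥ 1` leaves. -/
def comb : ℕ → MTree
  | 0 => node []
  | 1 => node []
  | n + 2 => node [node [], comb (n + 1)]

/-- The star `FS_n`, whose root has `n` children, all of them leaves. -/
def star (n : ℕ) : MTree := node (List.replicate n (node []))

/-- The median of a list of real numbers. -/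
noncomputable def median (l : List ℝ) : ℝ :=
  let s := l.mergeSort (fun a b => a ≤ b)
  if l.length % 2 = 1 then s.getD (l.length / 2) 0
  else (s.getD (l.length / 2 - 1) 0 + s.getD (l.length / 2) 0) / 2

/-- The mean deviation from the median of a list of real numbers. -/
noncomputable def MDM (l : List ℝ) : ℝ :=
  (l.map (fun x => |x - median l|)).sum / l.length

/-- The sample variance of a list of real numbers. -/
noncomputable def svar (l : List ℝ) : ℝ :=
  (l.map (fun x => (x - l.sum / l.length) ^ 2)).sum / ((l.length : ℝ) - 1)

/-- The sample standard deviation of a list of real numbers. -/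
noncomputable def ssd (l : List ℝ) : ℝ := Real.sqrt (svar l)

end MTree

/-! Induction on the tree. Let the root have `k ≥ 2` children with `n₁, …, n_k` leaves,
`n = Σ nᵢ`. Since `f j ≤ (j - 1) f 2` for `j ≥ 2`, a tree with `m` leaves has `f`-size between
`f 0` and `m (f 0 + f 2) - f 2`, and `nᵢ ≤ n - k + 1`; so the MDM at the root is at most half the
spread, `(f 0 + f 2) (n - k) / 2`. As `y ↦ y (y - 1)` is superadditive on `y ≥ 0`, the children
contribute at most `(f 0 + f 2) / 4 · (n - k) (n - k - 1)`. The total,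
`(f 0 + f 2) / 4 · (n - k) (n - k + 1)`, is at most the claimed bound, strictly when `k ≥ 3`.
For `k = 2` the estimate loses exactly `(f 0 + f 2) / 2 · (n₁ - 1) (n₂ - 1)`, so equality forces
one child to be a leaf and the other to attain the bound, hence (inductively) to be a comb. -/

namespace MTree

theorem induction_node {P : MTree → Prop}
    (node : ∀ ts, (∀ t ∈ ts, P t) → P (node ts)) (T : MTree) : P T :=
  match T with
  | .node ts => node ts fun t _ => induction_node node t
decreasing_by
  have := List.sizeOf_lt_of_mem ‹t ∈ ts›
  simp only [MTree.node.sizeOf_spec]; omega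

theorem leafCount_node (ts : List MTree) :
    leafCount (node ts) = max 1 (ts.map leafCount).sum := by
  rw [leafCount, List.attach_map_val]

theorem deltaF_node (f : ℕ → ℝ) (ts : List MTree) :
    deltaF f (node ts) = f ts.length + (ts.map (deltaF f)).sum := by
  rw [deltaF, List.attach_map_val]

theorem cIndex_node (D : List ℝ → ℝ) (f : ℕ → ℝ) (ts : List MTree) :
    cIndex D f (node ts) =
      (if ts.isEmpty then 0 else D (ts.map (deltaF f))) + (ts.map (cIndex D f)).sum := by
  rw [cIndex, List.attach_map_val]

theorem deltaF_leaf (f : ℕ → ℝ) : deltaF f (node []) = f 0 := by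
  simp [deltaF_node]

theorem cIndex_leaf (D : List ℝ → ℝ) (f : ℕ → ℝ) : cIndex D f (node []) = 0 := by
  simp [cIndex_node]

theorem cIndex_node_of_ne_nil (D : List ℝ → ℝ) (f : ℕ → ℝ) {ts : List MTree} (h : ts ≠ []) :
    cIndex D f (node ts) = D (ts.map (deltaF f)) + (ts.map (cIndex D f)).sum := by
  rw [cIndex_node, if_neg (by simpa using h)]

theorem one_le_leafCount (T : MTree) : 1 ≤ T.leafCount := by
  cases T with
  | node ts => rw [leafCount_node]; exact le_max_left _ _

theorem length_le_sum_leafCount (ts : List MTree) : ts.length ≤ (ts.map leafCount).sum := by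
  simpa using List.sum_le_sum fun t (_ : t ∈ ts) => one_le_leafCount t

theorem leafCount_node_of_ne_nil {ts : List MTree} (h : ts ≠ []) :
    leafCount (node ts) = (ts.map leafCount).sum := by
  have := length_le_sum_leafCount ts
  have := List.length_pos_iff.mpr h
  rw [leafCount_node]; omega

theorem leafCount_add_length_le_of_mem {ts : List MTree} {t : MTree} (ht : t ∈ ts) :
    leafCount t + ts.length ≤ (ts.map leafCount).sum + 1 := by
  obtain ⟨l₁, l₂, rfl⟩ := List.append_of_mem ht
  have := length_le_sum_leafCount l₁
  have := length_le_sum_leafCount l₂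
  simp only [List.map_append, List.map_cons, List.sum_append, List.sum_cons,
    List.length_append, List.length_cons]
  omega

theorem cast_sum_leafCount (ts : List MTree) :
    (((ts.map leafCount).sum : ℕ) : ℝ) = (ts.map fun t => (leafCount t : ℝ)).sum := by
  rw [Nat.cast_list_sum, List.map_map]; rfl

theorem WellFormed.of_mem {ts : List MTree} {t : MTree} (h : WellFormed (MTree.node ts))
    (ht : t ∈ ts) : WellFormed t := by
  cases h with
  | node _ h => exact h t ht

theorem WellFormed.two_le_length {ts : List MTree} (h : WellFormed (MTree.node ts))
    (hne : ts ≠ []) : 2 ≤ ts.length := by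
  cases h with
  | node h _ => have := List.length_pos_iff.mpr hne; omega

theorem Iso.refl (T : MTree) : Iso T T := by
  induction T using induction_node with
  | node ts ih => exact .node (List.forall₂_same.mpr ih) (.refl _)

theorem map_eq_map_of_forall₂ {α β : Type*} {R : α → α → Prop} {φ : α → β} {l l' : List α}
    (h : List.Forall₂ R l l') (hφ : ∀ a ∈ l, ∀ b, R a b → φ a = φ b) : l.map φ = l'.map φ := by
  induction h with
  | nil => rfl
  | cons hab _ ih =>
    simp only [List.map_cons, List.forall_mem_cons] at hφ ⊢
    rw [hφ.1 _ hab, ih hφ.2]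

theorem Iso.deltaF_eq (f : ℕ → ℝ) {T U : MTree} (h : Iso T U) : deltaF f T = deltaF f U := by
  induction T using induction_node generalizing U with
  | node ts ih =>
    obtain ⟨hvs, hperm⟩ := h
    rw [deltaF_node, deltaF_node, map_eq_map_of_forall₂ hvs ih, (hperm.map _).sum_eq,
      hvs.length_eq, hperm.length_eq]

theorem Iso.cIndex_eq {D : List ℝ → ℝ} (hD : ∀ l l' : List ℝ, l.Perm l' → D l = D l')
    (f : ℕ → ℝ) {T U : MTree} (h : Iso T U) : cIndex D f T = cIndex D f U := by
  induction T using induction_node generalizing U with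
  | node ts ih =>
    obtain @⟨_, us, _, hvs, hperm⟩ := h
    have hδ := map_eq_map_of_forall₂ hvs fun t _ u htu => htu.deltaF_eq f
    have hempty : ts.isEmpty = us.isEmpty := by
      rw [Bool.eq_iff_iff, List.isEmpty_iff_length_eq_zero, List.isEmpty_iff_length_eq_zero,
        hvs.length_eq, hperm.length_eq]
    rw [cIndex_node, cIndex_node, map_eq_map_of_forall₂ hvs ih, (hperm.map _).sum_eq, hδ,
      hD _ _ (hperm.map _), hempty]

theorem Iso.pair {a b a' b' : MTree} (ha : Iso a a') (hb : Iso b b') :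
    Iso (MTree.node [a, b]) (MTree.node [a', b']) :=
  .node (.cons ha (.cons hb .nil)) (.refl _)

theorem Iso.pair_swap {a b a' b' : MTree} (ha : Iso a a') (hb : Iso b b') :
    Iso (MTree.node [a, b]) (MTree.node [b', a']) :=
  .node (.cons ha (.cons hb .nil)) (.swap _ _ _)

theorem median_perm {l l' : List ℝ} (h : l.Perm l') : median l = median l' := by
  have hsort : l.mergeSort (fun a b => a ≤ b) = l'.mergeSort (fun a b => a ≤ b) :=
    ((List.mergeSort_perm _ _).trans (h.trans (List.mergeSort_perm _ _).symm)).eq_of_sortedLE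
      List.sortedLE_mergeSort List.sortedLE_mergeSort
  rw [median, median, hsort, h.length_eq]

theorem MDM_perm {l l' : List ℝ} (h : l.Perm l') : MDM l = MDM l' := by
  rw [MDM, MDM, median_perm h, h.length_eq, (h.map _).sum_eq]

theorem median_pair (x y : ℝ) : median [x, y] = (x + y) / 2 := by
  have hp := List.mergeSort_perm [x, y] (fun a b => a ≤ b)
  obtain ⟨a, b, hab⟩ := List.length_eq_two.mp (hp.length_eq.trans rfl)
  have hsum : a + b = x + y := by simpa [hab] using hp.sum_eq
  simp [median, hab, hsum]

theorem MDM_pair (x y : ℝ) : MDM [x, y] = |x - y| / 2 := by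
  rw [MDM, median_pair, abs_sub_comm x y]
  have hx : x - (x + y) / 2 = (x - y) / 2 := by ring
  have hy : y - (x + y) / 2 = (y - x) / 2 := by ring
  simp only [List.map_cons, List.map_nil, List.sum_cons, List.sum_nil, List.length_cons,
    List.length_nil, hx, hy, abs_div, abs_two, abs_sub_comm x y]
  ring

section SortedMedian

variable (l : List ℝ) {i : ℕ}

local notation "sorted" => l.mergeSort (fun a b => a ≤ b)

theorem getElem_mergeSort_le_median (hi : i < l.length / 2) :
    (sorted)[i]'(by grind [List.length_mergeSort]) ≤ median l := by
  have hmono := List.sortedLE_iff_getElem_le_getElem_of_le.mp (List.sortedLE_mergeSort (l := l))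
  have hlen : (sorted).length = l.length := List.length_mergeSort _
  rw [median]
  split_ifs
  · rw [List.getD_eq_getElem _ _ (by omega)]
    exact hmono (by omega)
  · rw [List.getD_eq_getElem _ _ (by omega), List.getD_eq_getElem _ _ (by omega)]
    have := @hmono i (l.length / 2 - 1) (by omega) (by omega) (by omega)
    have := @hmono (l.length / 2 - 1) (l.length / 2) (by omega) (by omega) (by omega)
    linarith

theorem median_le_getElem_mergeSort (hi₁ : l.length / 2 ≤ i) (hi₂ : i < l.length) :
    median l ≤ (sorted)[i]'(by grind [List.length_mergeSort]) := by
  have hmono := List.sortedLE_iff_getElem_le_getElem_of_le.mp (List.sortedLE_mergeSort (l := l))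
  have hlen : (sorted).length = l.length := List.length_mergeSort _
  rw [median]
  split_ifs
  · rw [List.getD_eq_getElem _ _ (by omega)]
    exact hmono hi₁
  · rw [List.getD_eq_getElem _ _ (by omega), List.getD_eq_getElem _ _ (by omega)]
    have := @hmono (l.length / 2 - 1) (l.length / 2) (by omega) (by omega) (by omega)
    have := @hmono (l.length / 2) i (by omega) (by omega) hi₁
    linarith

theorem median_eq_getElem_mergeSort (hodd : l.length % 2 = 1) :
    median l = (sorted)[l.length / 2]'(by grind [List.length_mergeSort]) := by
  rw [median, if_pos hodd, List.getD_eq_getElem]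

end SortedMedian

/-- Pairing the `i`-th smallest with the `i`-th largest entry: the two lie on opposite sides of
the median, so their deviations from it add up to at most `hi - lo`. -/
theorem MDM_le_of_forall_mem_Icc {l : List ℝ} (hne : l ≠ []) {lo hi : ℝ}
    (h : ∀ x ∈ l, x ∈ Set.Icc lo hi) : MDM l ≤ (hi - lo) / 2 := by
  set s := l.mergeSort (fun a b => a ≤ b)
  set M := median l
  have hperm : s.Perm l := List.mergeSort_perm _ _
  have hlen : s.length = l.length := hperm.length_eq
  have hmem (i : ℕ) (hlt : i < s.length) : s[i] ∈ Set.Icc lo hi :=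
    h _ (hperm.subset (List.getElem_mem _))
  have hpair (i : Fin s.length) : |s[(i : ℕ)] - M| + |s[(i.rev : ℕ)] - M| ≤ hi - lo := by
    have hmi := hmem i i.2
    have hmj := hmem i.rev i.rev.2
    have hrev : (i.rev : ℕ) = s.length - (i + 1) := Fin.val_rev i
    rcases lt_or_ge (i : ℕ) (l.length / 2) with h₁ | h₁
    · have : s[(i : ℕ)] ≤ M := getElem_mergeSort_le_median l h₁
      have : M ≤ s[(i.rev : ℕ)] := median_le_getElem_mergeSort l (by omega) (by omega)
      rw [abs_of_nonpos (by linarith), abs_of_nonneg (by linarith)]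
      linarith [hmi.1, hmj.2]
    rcases lt_or_ge (i.rev : ℕ) (l.length / 2) with h₂ | h₂
    · have : s[(i.rev : ℕ)] ≤ M := getElem_mergeSort_le_median l h₂
      have : M ≤ s[(i : ℕ)] := median_le_getElem_mergeSort l h₁ (by omega)
      rw [abs_of_nonneg (by linarith), abs_of_nonpos (by linarith)]
      linarith [hmi.2, hmj.1]
    · have hmid : (i : ℕ) = l.length / 2 ∧ (i.rev : ℕ) = l.length / 2 := by omega
      have : M = s[l.length / 2] := median_eq_getElem_mergeSort l (by omega)
      simp only [hmid, ← this, sub_self, abs_zero, add_zero]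
      linarith [hmi.1, hmi.2]
  have hsum : (l.map fun x => |x - M|).sum = ∑ i : Fin s.length, |s[(i : ℕ)] - M| := by
    rw [← (hperm.map _).sum_eq]
    exact (Fin.sum_univ_fun_getElem s _).symm
  have hdouble : 2 * ∑ i : Fin s.length, |s[(i : ℕ)] - M| ≤ s.length * (hi - lo) := by
    calc 2 * ∑ i : Fin s.length, |s[(i : ℕ)] - M|
        = ∑ i : Fin s.length, (|s[(i : ℕ)] - M| + |s[(i.rev : ℕ)] - M|) := by
          rw [Finset.sum_add_distrib, Fintype.sum_equiv Fin.revPerm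
            (fun i : Fin s.length => |s[(i.rev : ℕ)] - M|) (fun i => |s[(i : ℕ)] - M|)
            (fun i => by simp)]
          ring
      _ ≤ ∑ _i : Fin s.length, (hi - lo) := Finset.sum_le_sum fun i _ => hpair i
      _ = s.length * (hi - lo) := by
          rw [Finset.sum_const, Finset.card_univ, Fintype.card_fin, nsmul_eq_mul]
  have hpos : (0 : ℝ) < l.length := by exact_mod_cast List.length_pos_iff.mpr hne
  rw [MDM, hsum, div_le_div_iff₀ hpos two_pos, ← hlen]
  linarith

variable {f : ℕ → ℝ}

theorem le_sub_one_mul_of_le_add (hf : ∀ k, 3 ≤ k → f k ≤ f (k - 1) + f 2) {k : ℕ}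
    (hk : 2 ≤ k) : f k ≤ ((k : ℝ) - 1) * f 2 := by
  induction k, hk using Nat.le_induction with
  | base => norm_num
  | succ k hk ih =>
    have := hf (k + 1) (by omega)
    rw [Nat.add_sub_cancel] at this
    push_cast
    linarith

theorem f0_mul_leafCount_le_deltaF (hf0 : ∀ n, 0 ≤ f n) (T : MTree) :
    f 0 * leafCount T ≤ deltaF f T := by
  induction T using induction_node with
  | node ts ih =>
    rcases eq_or_ne ts [] with rfl | hne
    · simp [deltaF_node, leafCount_node]
    · rw [deltaF_node, leafCount_node_of_ne_nil hne, cast_sum_leafCount,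
        ← List.sum_map_mul_left]
      linarith [hf0 ts.length, List.sum_le_sum ih]

theorem f0_le_deltaF (hf0 : ∀ n, 0 ≤ f n) (T : MTree) : f 0 ≤ deltaF f T :=
  (le_mul_of_one_le_right (hf0 0) (by exact_mod_cast one_le_leafCount T)).trans
    (f0_mul_leafCount_le_deltaF hf0 T)

theorem deltaF_add_le (hle : ∀ k, 2 ≤ k → f k ≤ ((k : ℝ) - 1) * f 2) {T : MTree}
    (hwf : WellFormed T) : deltaF f T + f 2 ≤ leafCount T * (f 0 + f 2) := by
  induction T using induction_node with
  | node ts ih =>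
    rcases eq_or_ne ts [] with rfl | hne
    · simp [deltaF_node, leafCount_node]
    · have hk := hwf.two_le_length hne
      have hsum := List.sum_le_sum fun t ht => ih t ht (hwf.of_mem ht)
      simp only [List.sum_map_add, List.map_const', List.sum_replicate, nsmul_eq_mul,
        List.sum_map_mul_right] at hsum
      rw [deltaF_node, leafCount_node_of_ne_nil hne, cast_sum_leafCount]
      linarith [hle _ hk]

theorem MDM_map_deltaF_le (hf0 : ∀ n, 0 ≤ f n) (hle : ∀ k, 2 ≤ k → f k ≤ ((k : ℝ) - 1) * f 2)
    {ts : List MTree} (hwf : WellFormed (node ts)) (hne : ts ≠ []) :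
    MDM (ts.map (deltaF f)) ≤
      (f 0 + f 2) / 2 * (((ts.map leafCount).sum : ℕ) - (ts.length : ℝ)) := by
  have hchild (t : MTree) (ht : t ∈ ts) :
      (leafCount t : ℝ) + ts.length ≤ ((ts.map leafCount).sum : ℕ) + 1 := by
    exact_mod_cast leafCount_add_length_le_of_mem ht
  set S : ℝ := (((ts.map leafCount).sum : ℕ) : ℝ)
  set k : ℝ := (ts.length : ℝ)
  have hbound : ∀ x ∈ ts.map (deltaF f),
      x ∈ Set.Icc (f 0) ((S - k + 1) * (f 0 + f 2) - f 2) := by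
    simp only [List.mem_map]
    rintro _ ⟨t, ht, rfl⟩
    refine ⟨f0_le_deltaF hf0 t, ?_⟩
    have := deltaF_add_le hle (hwf.of_mem ht)
    have hroom : (0 : ℝ) ≤ S - k + 1 - leafCount t := by linarith [hchild t ht]
    nlinarith [mul_nonneg hroom (add_nonneg (hf0 0) (hf0 2))]
  calc MDM (ts.map (deltaF f)) ≤ _ := MDM_le_of_forall_mem_Icc (by simpa using hne) hbound
    _ = _ := by ring

theorem comb_succ {n : ℕ} (hn : 1 ≤ n) : comb (n + 1) = node [node [], comb n] := by
  obtain ⟨m, rfl⟩ := Nat.exists_eq_add_of_le' hn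
  rfl

theorem deltaF_comb (f : ℕ → ℝ) {n : ℕ} (hn : 1 ≤ n) :
    deltaF f (comb n) = n * f 0 + ((n : ℝ) - 1) * f 2 := by
  induction n, hn using Nat.le_induction with
  | base => simp [comb, deltaF_leaf]
  | succ n hn ih =>
    rw [comb_succ hn, deltaF_node]
    simp only [List.length_cons, List.length_nil, List.map_cons, List.map_nil, List.sum_cons,
      List.sum_nil, deltaF_leaf, ih]
    push_cast
    ring

theorem cIndex_MDM_comb (hf02 : 0 ≤ f 0 + f 2) {n : ℕ} (hn : 1 ≤ n) :
    cIndex MDM f (comb n) = (f 0 + f 2) / 4 * ((n : ℝ) - 1) * ((n : ℝ) - 2) := by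
  induction n, hn using Nat.le_induction with
  | base => simp [comb, cIndex_leaf]
  | succ n hn ih =>
    have hspread : |f 0 - deltaF f (comb n)| = ((n : ℝ) - 1) * (f 0 + f 2) := by
      have : (1 : ℝ) ≤ n := by exact_mod_cast hn
      rw [deltaF_comb f hn, abs_of_nonpos (by nlinarith)]
      ring
    rw [comb_succ hn, cIndex_node_of_ne_nil _ _ (List.cons_ne_nil _ _)]
    simp only [List.map_cons, List.map_nil, List.sum_cons, List.sum_nil, deltaF_leaf,
      cIndex_leaf, MDM_pair, hspread, ih]
    push_cast
    ring

theorem sum_map_mul_sub_one_le {l : List ℝ} (hl : ∀ y ∈ l, 0 ≤ y) :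
    (l.map fun y => y * (y - 1)).sum ≤ l.sum * (l.sum - 1) := by
  induction l with
  | nil => simp
  | cons a l ih =>
    simp only [List.forall_mem_cons] at hl
    have := List.sum_nonneg hl.2
    simp only [List.map_cons, List.sum_cons]
    nlinarith [ih hl.2, mul_nonneg hl.1 this]

theorem cIndex_MDM_node_le (hf0 : ∀ n, 0 ≤ f n)
    (hle : ∀ k, 2 ≤ k → f k ≤ ((k : ℝ) - 1) * f 2)
    {ts : List MTree} (hwf : WellFormed (node ts)) (hne : ts ≠ [])
    (hts : ∀ t ∈ ts, cIndex MDM f t ≤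
      (f 0 + f 2) / 4 * ((leafCount t : ℝ) - 1) * ((leafCount t : ℝ) - 2)) :
    cIndex MDM f (node ts) ≤ (f 0 + f 2) / 4 *
      ((((ts.map leafCount).sum : ℕ) : ℝ) - ts.length) *
      ((((ts.map leafCount).sum : ℕ) : ℝ) - ts.length + 1) := by
  have hmdm := MDM_map_deltaF_le hf0 hle hwf hne
  have hshift : (ts.map fun t => (leafCount t : ℝ) - 1).sum =
      (((ts.map leafCount).sum : ℕ) : ℝ) - ts.length := by
    rw [cast_sum_leafCount]
    simp [sub_eq_add_neg, List.sum_map_add]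
  have hsuper := sum_map_mul_sub_one_le (l := ts.map fun t => (leafCount t : ℝ) - 1)
    (by simpa using fun t _ => one_le_leafCount t)
  rw [hshift, List.map_map] at hsuper
  have hsum : (ts.map (cIndex MDM f)).sum ≤ (f 0 + f 2) / 4 *
      (ts.map ((fun y => y * (y - 1)) ∘ fun t => (leafCount t : ℝ) - 1)).sum := by
    rw [← List.sum_map_mul_left]
    exact List.sum_le_sum fun t ht => (hts t ht).trans_eq (by simp only [Function.comp]; ring)
  have hc : 0 ≤ (f 0 + f 2) / 4 := by linarith [hf0 0, hf0 2]
  rw [cIndex_node_of_ne_nil _ _ hne]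
  linarith [mul_le_mul_of_nonneg_left hsuper hc]

theorem cIndex_MDM_le (hf0 : ∀ n, 0 ≤ f n) (hle : ∀ k, 2 ≤ k → f k ≤ ((k : ℝ) - 1) * f 2)
    {T : MTree} (hwf : WellFormed T) :
    cIndex MDM f T ≤ (f 0 + f 2) / 4 * ((leafCount T : ℝ) - 1) * ((leafCount T : ℝ) - 2) := by
  induction T using induction_node with
  | node ts ih =>
    rcases eq_or_ne ts [] with rfl | hne
    · simp [cIndex_leaf, leafCount_node]
    have hk : (2 : ℝ) ≤ ts.length := by exact_mod_cast hwf.two_le_length hne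
    have hkS : (ts.length : ℝ) ≤ ((ts.map leafCount).sum : ℕ) := by
      exact_mod_cast length_le_sum_leafCount ts
    have hc : 0 ≤ (f 0 + f 2) / 4 := by linarith [hf0 0, hf0 2]
    rw [leafCount_node_of_ne_nil hne]
    refine (cIndex_MDM_node_le hf0 hle hwf hne fun t ht => ih t ht (hwf.of_mem ht)).trans ?_
    rw [mul_assoc, mul_assoc]
    exact mul_le_mul_of_nonneg_left (by nlinarith) hc

theorem cIndex_MDM_lt_of_three_le_length (hf0 : ∀ n, 0 ≤ f n)
    (hle : ∀ k, 2 ≤ k → f k ≤ ((k : ℝ) - 1) * f 2) (hc : 0 < f 0 + f 2)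
    {ts : List MTree} (hwf : WellFormed (node ts)) (hk : 3 ≤ ts.length) :
    cIndex MDM f (node ts) < (f 0 + f 2) / 4 *
      ((leafCount (node ts) : ℝ) - 1) * ((leafCount (node ts) : ℝ) - 2) := by
  have hne : ts ≠ [] := List.ne_nil_of_length_pos (by omega)
  have hk : (3 : ℝ) ≤ ts.length := by exact_mod_cast hk
  have hkS : (ts.length : ℝ) ≤ ((ts.map leafCount).sum : ℕ) := by
    exact_mod_cast length_le_sum_leafCount ts
  rw [leafCount_node_of_ne_nil hne]
  refine (cIndex_MDM_node_le hf0 hle hwf hne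
    fun t ht => cIndex_MDM_le hf0 hle (hwf.of_mem ht)).trans_lt ?_
  rw [mul_assoc, mul_assoc]
  exact mul_lt_mul_of_pos_left (by nlinarith) (by positivity)

theorem eq_bound_of_cIndex_MDM_pair_eq (hf0 : ∀ n, 0 ≤ f n)
    (hle : ∀ k, 2 ≤ k → f k ≤ ((k : ℝ) - 1) * f 2) (hc : 0 < f 0 + f 2)
    {t₁ t₂ : MTree} (hwf : WellFormed (node [t₁, t₂]))
    (heq : cIndex MDM f (node [t₁, t₂]) = (f 0 + f 2) / 4 *
      ((leafCount (node [t₁, t₂]) : ℝ) - 1) * ((leafCount (node [t₁, t₂]) : ℝ) - 2)) :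
    ((leafCount t₁ : ℝ) - 1) * ((leafCount t₂ : ℝ) - 1) = 0 ∧
      cIndex MDM f t₁ = (f 0 + f 2) / 4 * ((leafCount t₁ : ℝ) - 1) * ((leafCount t₁ : ℝ) - 2) ∧
      cIndex MDM f t₂ = (f 0 + f 2) / 4 * ((leafCount t₂ : ℝ) - 1) * ((leafCount t₂ : ℝ) - 2) := by
  have hne : [t₁, t₂] ≠ [] := List.cons_ne_nil _ _
  have hmdm := MDM_map_deltaF_le hf0 hle hwf hne
  have hb₁ := cIndex_MDM_le hf0 hle (hwf.of_mem (List.mem_cons_self))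
  have hb₂ := cIndex_MDM_le hf0 hle (hwf.of_mem (List.mem_cons_of_mem _ List.mem_cons_self))
  have hn₁ : (1 : ℝ) ≤ leafCount t₁ := by exact_mod_cast one_le_leafCount t₁
  have hn₂ : (1 : ℝ) ≤ leafCount t₂ := by exact_mod_cast one_le_leafCount t₂
  rw [cIndex_node_of_ne_nil _ _ hne, leafCount_node_of_ne_nil hne] at heq
  simp only [List.map_cons, List.map_nil, List.sum_cons, List.sum_nil, add_zero,
    List.length_cons, List.length_nil] at heq hmdm
  push_cast at heq hmdm
  set n₁ : ℝ := (leafCount t₁ : ℝ)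
  set n₂ : ℝ := (leafCount t₂ : ℝ)
  set c := (f 0 + f 2) / 4
  have hsplit : c * (n₁ + n₂ - 1) * (n₁ + n₂ - 2) = (f 0 + f 2) / 2 * (n₁ + n₂ - 2) +
      c * (n₁ - 1) * (n₁ - 2) + c * (n₂ - 1) * (n₂ - 2) +
      (f 0 + f 2) / 2 * ((n₁ - 1) * (n₂ - 1)) := by
    ring
  have hP : 0 ≤ (n₁ - 1) * (n₂ - 1) := mul_nonneg (by linarith) (by linarith)
  have hP0 : (n₁ - 1) * (n₂ - 1) = 0 :=
    le_antisymm (nonpos_of_mul_nonpos_right (by linarith) (half_pos hc)) hP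
  rw [hP0, mul_zero, add_zero] at hsplit
  exact ⟨hP0, by linarith, by linarith⟩

theorem iso_comb_of_cIndex_MDM_eq (hf0 : ∀ n, 0 ≤ f n)
    (hle : ∀ k, 2 ≤ k → f k ≤ ((k : ℝ) - 1) * f 2) (hc : 0 < f 0 + f 2)
    {T : MTree} (hwf : WellFormed T)
    (heq : cIndex MDM f T =
      (f 0 + f 2) / 4 * ((leafCount T : ℝ) - 1) * ((leafCount T : ℝ) - 2)) :
    Iso T (comb (leafCount T)) := by
  induction T using induction_node with
  | node ts ih =>
    rcases eq_or_ne ts [] with rfl | hne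
    · rw [leafCount_node]
      exact Iso.refl _
    obtain hk | hk := (hwf.two_le_length hne).eq_or_lt
    · obtain ⟨t₁, t₂, rfl⟩ := List.length_eq_two.mp hk.symm
      obtain ⟨hP, he₁, he₂⟩ := eq_bound_of_cIndex_MDM_pair_eq hf0 hle hc hwf heq
      have hi₁ := ih t₁ (by simp) (hwf.of_mem (by simp)) he₁
      have hi₂ := ih t₂ (by simp) (hwf.of_mem (by simp)) he₂
      rw [leafCount_node_of_ne_nil hne]
      simp only [List.map_cons, List.map_nil, List.sum_cons, List.sum_nil, add_zero]
      rcases mul_eq_zero.mp hP with h | h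
      · have h₁ : leafCount t₁ = 1 := by exact_mod_cast sub_eq_zero.mp h
        rw [h₁] at hi₁ ⊢
        rw [add_comm, comb_succ (one_le_leafCount t₂)]
        exact hi₁.pair hi₂
      · have h₂ : leafCount t₂ = 1 := by exact_mod_cast sub_eq_zero.mp h
        rw [h₂] at hi₂ ⊢
        rw [comb_succ (one_le_leafCount t₁)]
        exact hi₁.pair_swap hi₂
    · exact absurd heq (cIndex_MDM_lt_of_three_le_length hf0 hle hc hwf hk).ne

end MTree

theorem cIndex_MDM_le_comb_general (f : ℕ → ℝ) (hf0 : ∀ n, 0 ≤ f n)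
    (hf : ∀ k, 3 ≤ k → 0 < f k ∧ f k < f (k - 1) + f 2)
    (n : ℕ) (T : MTree) (hT : T.WellFormed) (hTn : T.leafCount = n) :
    MTree.cIndex MTree.MDM f T ≤ (f 0 + f 2) / 4 * ((n : ℝ) - 1) * ((n : ℝ) - 2) ∧
    (MTree.cIndex MTree.MDM f T = (f 0 + f 2) / 4 * ((n : ℝ) - 1) * ((n : ℝ) - 2) ↔
      T.Iso (MTree.comb n)) := by
  have hle (k : ℕ) (hk : 2 ≤ k) : f k ≤ ((k : ℝ) - 1) * f 2 :=
    MTree.le_sub_one_mul_of_le_add (fun k hk => (hf k hk).2.le) hk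
  have hc : 0 < f 0 + f 2 := by
    have := hf 3 le_rfl
    norm_num at this
    linarith [hf0 0]
  subst hTn
  refine ⟨MTree.cIndex_MDM_le hf0 hle hT,
    MTree.iso_comb_of_cIndex_MDM_eq hf0 hle hc hT, fun hiso => ?_⟩
  rw [hiso.cIndex_eq (fun _ _ => MTree.MDM_perm) f,
    MTree.cIndex_MDM_comb hc.le (MTree.one_le_leafCount T)]

/-- Theorem 18 for `D = MDM`: if `0 < f k < f (k-1) + f 2` for all `k ≥ 3`, then on
trees with `n ≥ 2` leaves the index `𝔠_{MDM,f}` is at most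
`(f 0 + f 2)/4 · (n-1)(n-2)`, with equality exactly at the comb `K_n`. -/
theorem cIndex_MDM_le_comb (f : ℕ → ℝ) (hf0 : ∀ n, 0 ≤ f n)
    (hf : ∀ k, 3 ≤ k → 0 < f k ∧ f k < f (k - 1) + f 2)
    (n : ℕ) (hn : 2 ≤ n) (T : MTree) (hT : T.WellFormed) (hTn : T.leafCount = n) :
    MTree.cIndex MTree.MDM f T ≤ (f 0 + f 2) / 4 * ((n : ℝ) - 1) * ((n : ℝ) - 2) ∧
    (MTree.cIndex MTree.MDM f T = (f 0 + f 2) / 4 * ((n : ℝ) - 1) * ((n : ℝ) - 2) ↔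
      T.Iso (MTree.comb n)) :=
  cIndex_MDM_le_comb_general f hf0 hf n T hT hTn
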